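/- For a nonnegative N×N matrix W with ρ(W) < s, the function h(W) = N·log(s) - log det(sI - W) satisfies h(W) = 0 if and only if W is nilpotent (i.e., W^N = 0). -/

import Mathlib

open Matrix Polynomial

lemma eval_charpoly_det {n : Type*} [DecidableEq n] [Fintype n] {R : Type*} [CommRing R]
    (M : Matrix n n R) (t : R) :
    (M.charpoly).eval t = (t • (1 : Matrix n n R) - M).det := by
  have h := RingHom.map_det (Polynomial.evalRingHom t) (Matrix.charmatrix M)
  rw [Matrix.charpoly] at *
  rw [show (Polynomial.evalRingHom t) (Matrix.charmatrix M).det = (M.charmatrix.det).eval t from rfl] at h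
  rw [h]
  congr 1
  ext i j
  by_cases hij : i = j <;>
    simp [hij, Matrix.charmatrix_apply, Matrix.one_apply, Matrix.diagonal_apply]

lemma mem_spectrum_of_root' {N : ℕ} (M : Matrix (Fin N) (Fin N) ℂ) {μ : ℂ}
    (h : M.charpoly.eval μ = 0) : μ ∈ spectrum ℂ M := by
  rw [spectrum.mem_iff]
  intro hu
  rw [Matrix.isUnit_iff_isUnit_det, Algebra.algebraMap_eq_smul_one] at hu
  rw [eval_charpoly_det] at h
  rw [h] at hu
  exact hu.ne_zero rfl

lemma roots_card' {N : ℕ} (M : Matrix (Fin N) (Fin N) ℂ) : M.charpoly.roots.card = N := by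
  have h1 : M.charpoly.natDegree = N := by
    simpa using M.charpoly_natDegree_eq_dim
  have := Polynomial.splits_iff_card_roots.mp (IsAlgClosed.splits M.charpoly)
  omega

lemma charpoly_eq_prod' {N : ℕ} (M : Matrix (Fin N) (Fin N) ℂ) :
    (M.charpoly.roots.map fun a => X - C a).prod = M.charpoly :=
  prod_multiset_X_sub_C_of_monic_of_roots_card_eq M.charpoly_monic
    (by rw [roots_card']; simpa using M.charpoly_natDegree_eq_dim.symm)

lemma det_eq_prod_roots' {N : ℕ} (M : Matrix (Fin N) (Fin N) ℂ) (t : ℂ) :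
    (t • (1 : Matrix (Fin N) (Fin N) ℂ) - M).det = (M.charpoly.roots.map fun μ => t - μ).prod := by
  rw [← eval_charpoly_det, ← charpoly_eq_prod' M, eval_multiset_prod, Multiset.map_map]
  simp [Function.comp]

lemma prod_map_const_mul {α R : Type*} [CommRing R] (m : Multiset α) (c : R) (f : α → R) :
    (m.map fun x => c * f x).prod = c ^ Multiset.card m * (m.map f).prod := by
  induction m using Multiset.induction_on with
  | empty => simp
  | cons a s ih => simp [ih, pow_succ]; ring

lemma charpoly_pow_eq' {N : ℕ} (M : Matrix (Fin N) (Fin N) ℂ) (k : ℕ) (hk : k ≠ 0) :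
    (M ^ k).charpoly = (M.charpoly.roots.map fun μ => X - C (μ ^ k)).prod := by
  apply Polynomial.funext
  intro y
  have hcard : Multiset.card M.charpoly.roots = N := roots_card' M
  set q : ℂ[X] := X ^ k - C y with hqdef
  have hqm : q.Monic := monic_X_pow_sub_C y hk
  have hqd : q.natDegree = k := natDegree_X_pow_sub_C
  have hScard : Multiset.card q.roots = k := by
    have := Polynomial.splits_iff_card_roots.mp (IsAlgClosed.splits q)
    omega
  have hq : (q.roots.map fun r => X - C r).prod = q :=
    prod_multiset_X_sub_C_of_monic_of_roots_card_eq hqm (by omega)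
  set L : List ℂ := q.roots.toList with hLdef
  have hLcoe : (L : Multiset ℂ) = q.roots := Multiset.coe_toList _
  have hqL : (L.map fun r => (X : ℂ[X]) - C r).prod = q := by
    rw [← hq, ← hLcoe, Multiset.map_coe, Multiset.prod_coe]
  have step1 : M ^ k - y • 1 = (L.map fun r => M - r • (1 : Matrix (Fin N) (Fin N) ℂ)).prod := by
    have h := congrArg (Polynomial.aeval M) hqL
    rw [map_list_prod, List.map_map] at h
    simp only [Function.comp_def, map_sub, Polynomial.aeval_X, Polynomial.aeval_C, map_pow,
      Algebra.algebraMap_eq_smul_one, hqdef] at h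
    exact h.symm
  have step2 : (y • (1 : Matrix (Fin N) (Fin N) ℂ) - M ^ k).det
      = (-1 : ℂ) ^ N * (q.roots.map fun r => (M - r • (1 : Matrix (Fin N) (Fin N) ℂ)).det).prod := by
    rw [← neg_sub (M ^ k) (y • (1 : Matrix (Fin N) (Fin N) ℂ)), Matrix.det_neg, Fintype.card_fin,
      step1]
    congr 1
    have h2 : ((L.map fun r => M - r • (1 : Matrix (Fin N) (Fin N) ℂ)).prod).det
        = ((L.map fun r => M - r • (1 : Matrix (Fin N) (Fin N) ℂ)).map Matrix.det).prod := by
      rw [← Matrix.coe_detMonoidHom, map_list_prod]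
    rw [h2, List.map_map, ← hLcoe, Multiset.map_coe, Multiset.prod_coe]
    rfl
  have step3 : ∀ r : ℂ, (M - r • (1 : Matrix (Fin N) (Fin N) ℂ)).det
      = (-1 : ℂ) ^ N * (M.charpoly.roots.map fun μ => r - μ).prod := by
    intro r
    rw [← neg_sub (r • (1 : Matrix (Fin N) (Fin N) ℂ)) M, Matrix.det_neg, Fintype.card_fin,
      det_eq_prod_roots']
  have inner : ∀ μ : ℂ, (q.roots.map fun r => r - μ).prod = (-1 : ℂ) ^ k * (μ ^ k - y) := by
    intro μ
    have hev : (q.roots.map fun r => μ - r).prod = μ ^ k - y := by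
      have h := congrArg (Polynomial.eval μ) hq
      rw [eval_multiset_prod, Multiset.map_map] at h
      simpa [Function.comp, hqdef] using h
    have hc : (q.roots.map fun r => r - μ) = q.roots.map fun r => (-1 : ℂ) * (μ - r) :=
      Multiset.map_congr rfl (by intro r _; ring)
    rw [hc, prod_map_const_mul, hScard, hev]
  -- evaluate both sides
  rw [eval_charpoly_det, eval_multiset_prod, Multiset.map_map]
  simp only [Function.comp, eval_sub, eval_X, eval_C]
  rw [step2]
  have hs3 : (q.roots.map fun r => (M - r • (1 : Matrix (Fin N) (Fin N) ℂ)).det)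
      = q.roots.map fun r => (-1 : ℂ) ^ N * (M.charpoly.roots.map fun μ => r - μ).prod :=
    Multiset.map_congr rfl (by intro r _; rw [step3])
  rw [hs3, prod_map_const_mul, hScard, Multiset.prod_map_prod_map]
  have hs4 : (M.charpoly.roots.map fun μ => (q.roots.map fun r => r - μ).prod)
      = M.charpoly.roots.map fun μ => (-1 : ℂ) ^ k * (μ ^ k - y) :=
    Multiset.map_congr rfl (by intro μ _; rw [inner])
  rw [hs4, prod_map_const_mul, hcard]
  have hs5 : (M.charpoly.roots.map fun μ => y - μ ^ k)
      = M.charpoly.roots.map fun μ => (-1 : ℂ) * (μ ^ k - y) :=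
    Multiset.map_congr rfl (by intro μ _; ring)
  rw [hs5, prod_map_const_mul, hcard]
  rw [show ((-1 : ℂ) ^ N) ^ k = (-1 : ℂ) ^ (N * k) by rw [pow_mul],
    show ((-1 : ℂ) ^ k) ^ N = (-1 : ℂ) ^ (k * N) by rw [pow_mul]]
  rw [← mul_assoc, ← mul_assoc, ← pow_add, ← pow_add]
  rw [show N + N * k + k * N = 2 * (N * k) + N by ring, pow_add, pow_mul, neg_one_sq, one_pow,
    one_mul]

lemma trace_pow_eq_sum_pow' {N : ℕ} (M : Matrix (Fin N) (Fin N) ℂ) (k : ℕ) (hk : k ≠ 0) :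
    (M ^ k).trace = (M.charpoly.roots.map fun μ => μ ^ k).sum := by
  rw [Matrix.trace_eq_sum_roots_charpoly, charpoly_pow_eq' M k hk]
  rw [show (M.charpoly.roots.map fun μ => X - C (μ ^ k)).prod
        = ((M.charpoly.roots.map fun μ => μ ^ k).map fun a => X - C a).prod by rw [Multiset.map_map]; rfl,
    roots_multiset_prod_X_sub_C]

lemma all_zero_of_power_sums_zero (m : Multiset ℂ)
    (h : ∀ k : ℕ, k ≠ 0 → (m.map fun μ => μ ^ k).sum = 0) : ∀ μ ∈ m, μ = 0 := by
  classical
  by_contra hc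
  push_neg at hc
  obtain ⟨μ₀, hμ₀m, hμ₀⟩ := hc
  set T : Finset ℂ := m.toFinset.erase 0 with hT
  have hμ₀T : μ₀ ∈ T := Finset.mem_erase.2 ⟨hμ₀, Multiset.mem_toFinset.2 hμ₀m⟩
  have hsumT : ∀ k : ℕ, k ≠ 0 → ∑ t ∈ T, (m.count t : ℂ) * t ^ k = 0 := by
    intro k hk
    have h1 := h k hk
    rw [Finset.sum_multiset_map_count] at h1
    have h2 : ∑ t ∈ T, m.count t • (t ^ k : ℂ) = ∑ a ∈ m.toFinset, m.count a • (a ^ k : ℂ) :=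
      Finset.sum_erase _ (by simp [zero_pow hk])
    rw [← h1, ← h2]
    exact Finset.sum_congr rfl (by intro t _; rw [nsmul_eq_mul])
  -- enumerate T
  set d := T.card with hd
  let e : T ≃ Fin d := T.equivFin
  let lam : Fin d → ℂ := fun j => ((e.symm j : T) : ℂ)
  have hlam_inj : Function.Injective lam := by
    intro a b hab
    exact e.symm.injective (Subtype.ext hab)
  have hlam_ne : ∀ j, lam j ≠ 0 := by
    intro j
    exact Finset.ne_of_mem_erase (e.symm j).2
  let V : Matrix (Fin d) (Fin d) ℂ := Matrix.of fun i j => lam j ^ ((i : ℕ) + 1)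
  have hdet : V.det ≠ 0 := by
    have hV : V = (Matrix.vandermonde lam).transpose * Matrix.diagonal lam := by
      ext i j
      simp [V, Matrix.mul_diagonal, Matrix.vandermonde, pow_succ]
    rw [hV, Matrix.det_mul, Matrix.det_transpose, Matrix.det_diagonal]
    exact mul_ne_zero (Matrix.det_vandermonde_ne_zero_iff.2 hlam_inj)
      (Finset.prod_ne_zero_iff.2 fun j _ => hlam_ne j)
  let c : Fin d → ℂ := fun j => (m.count (lam j) : ℂ)
  have hVc : V.mulVec c = 0 := by
    funext i
    show ∑ j, V i j * c j = 0
    have hswap : ∑ j, V i j * c j = ∑ t ∈ T, (m.count t : ℂ) * t ^ ((i : ℕ) + 1) := by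
      rw [← Finset.sum_coe_sort T]
      rw [← Equiv.sum_comp e.symm (fun t : T => (m.count (t : ℂ) : ℂ) * (t : ℂ) ^ ((i : ℕ) + 1))]
      exact Finset.sum_congr rfl (by intro j _; simp [V, lam, c]; ring)
    rw [hswap]
    exact hsumT _ (Nat.succ_ne_zero _)
  have hc0 := Matrix.eq_zero_of_mulVec_eq_zero hdet hVc
  have hcount : (m.count μ₀ : ℂ) = 0 := by
    have := congrFun hc0 (e ⟨μ₀, hμ₀T⟩)
    simpa [c, lam] using this
  have : m.count μ₀ = 0 := by exact_mod_cast hcount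
  rw [← Multiset.count_pos] at hμ₀m
  omega

lemma multiset_hasSum {α : Type*} (m : Multiset α) (f : α → ℕ → ℝ) (g : α → ℝ)
    (h : ∀ a ∈ m, HasSum (f a) (g a)) :
    HasSum (fun n => (m.map fun a => f a n).sum) ((m.map g).sum) := by
  induction m using Multiset.induction_on with
  | empty => simpa using hasSum_zero
  | cons a s ih =>
      simp only [Multiset.map_cons, Multiset.sum_cons]
      exact (h a (Multiset.mem_cons_self a s)).add
        (ih fun b hb => h b (Multiset.mem_cons_of_mem hb))

lemma multiset_log_prod (m : Multiset ℝ) (h : ∀ x ∈ m, 0 < x) :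
    Real.log m.prod = (m.map Real.log).sum := by
  induction m using Multiset.induction_on with
  | empty => simp
  | cons a s ih =>
      simp only [Multiset.map_cons, Multiset.sum_cons, Multiset.prod_cons]
      rw [Real.log_mul (ne_of_gt (h a (Multiset.mem_cons_self a s)))
        (ne_of_gt (Multiset.prod_pos fun x hx => h x (Multiset.mem_cons_of_mem hx))),
        ih fun x hx => h x (Multiset.mem_cons_of_mem hx)]

lemma sum_map_re (m : Multiset ℂ) : (m.map Complex.re).sum = m.sum.re := by
  induction m using Multiset.induction_on with
  | empty => simp
  | cons a s ih => simp [ih]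

lemma pow_entries_nonneg {N : ℕ} (W : Matrix (Fin N) (Fin N) ℝ) (hW : ∀ i j, 0 ≤ W i j) :
    ∀ k i j, 0 ≤ (W ^ k) i j := by
  intro k
  induction k with
  | zero => intro i j; by_cases h : i = j <;> simp [h, Matrix.one_apply]
  | succ n ih =>
      intro i j
      rw [pow_succ, Matrix.mul_apply]
      exact Finset.sum_nonneg fun l _ => mul_nonneg (ih i l) (hW l j)

lemma charpolyC_eval_real {N : ℕ} (W : Matrix (Fin N) (Fin N) ℝ) (t : ℝ) :
    (W.map Complex.ofReal).charpoly.eval (t : ℂ) = ((W.charpoly.eval t : ℝ) : ℂ) := by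
  have hmap : (W.map Complex.ofReal).charpoly = W.charpoly.map Complex.ofRealHom :=
    Matrix.charpoly_map W Complex.ofRealHom
  rw [hmap]
  rw [show ((t : ℂ)) = Complex.ofRealHom t from rfl, Polynomial.eval_map,
    Polynomial.eval₂_at_apply]
  rfl

lemma det_smul_one_sub_pos {N : ℕ} (W : Matrix (Fin N) (Fin N) ℝ) (s : ℝ) (hs : 0 < s)
    (hρ : ∀ μ : ℂ, μ ∈ spectrum ℂ (W.map Complex.ofReal) → ‖μ‖ < s) :
    0 < (s • (1 : Matrix (Fin N) (Fin N) ℝ) - W).det := by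
  rw [← eval_charpoly_det]
  set p := W.charpoly with hp
  have hmon : p.Monic := W.charpoly_monic
  have hroot : ∀ t : ℝ, s ≤ t → p.eval t ≠ 0 := by
    intro t ht h0
    have heval : (W.map Complex.ofReal).charpoly.eval (t : ℂ) = 0 := by
      rw [charpolyC_eval_real, ← hp, h0, Complex.ofReal_zero]
    have habs := hρ t (mem_spectrum_of_root' _ heval)
    rw [Complex.norm_real, Real.norm_eq_abs, abs_of_pos (lt_of_lt_of_le hs ht)] at habs
    linarith
  have hdegnat : p.natDegree = N := by
    rw [hp, W.charpoly_natDegree_eq_dim, Fintype.card_fin]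
  by_cases hN : N = 0
  · have hone : p = 1 := hmon.natDegree_eq_zero.mp (by omega)
    rw [hone]; norm_num
  · have hdeg : 0 < p.degree := by
      rw [Polynomial.degree_eq_natDegree hmon.ne_zero, hdegnat]
      exact_mod_cast Nat.pos_of_ne_zero hN
    have htend := Polynomial.tendsto_atTop_of_leadingCoeff_nonneg p hdeg
      (by rw [hmon.leadingCoeff]; norm_num)
    rcases lt_trichotomy (p.eval s) 0 with hneg | hzero | hpos
    · exfalso
      obtain ⟨t, ht0, hts⟩ :=
        ((htend.eventually_gt_atTop 0).and (Filter.eventually_ge_atTop s)).exists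
      have hsub := intermediate_value_Icc hts (p.continuous_aeval.continuousOn (s := Set.Icc s t))
      have h0mem : (0 : ℝ) ∈ Set.Icc (p.eval s) (p.eval t) := ⟨le_of_lt hneg, le_of_lt ht0⟩
      obtain ⟨c, hc, hc0⟩ := hsub h0mem
      exact hroot c hc.1 hc0
    · exact absurd hzero (hroot s le_rfl)
    · exact hpos

lemma sum_map_neg'' {β : Type*} (m : Multiset β) (f : β → ℝ) :
    (m.map fun a => -(f a)).sum = -((m.map f).sum) := by
  induction m using Multiset.induction_on with
  | empty => simp
  | cons a s ih => simp [ih]; ring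

noncomputable def hAcyc {N : ℕ} (s : ℝ) (W : Matrix (Fin N) (Fin N) ℝ) : ℝ :=
  N * Real.log s - Real.log (s • (1 : Matrix (Fin N) (Fin N) ℝ) - W).det

theorem hAcyc_eq_zero_iff_nilpotent {N : ℕ} (W : Matrix (Fin N) (Fin N) ℝ) (s : ℝ)
    (hW : ∀ i j, 0 ≤ W i j) (hs : 0 < s)
    (hρ : ∀ μ : ℂ, μ ∈ spectrum ℂ (W.map Complex.ofReal) → ‖μ‖ < s) :
    hAcyc s W = 0 ↔ W ^ N = 0 := by
  have hdetpos := det_smul_one_sub_pos W s hs hρ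
  constructor
  · intro h0
    have hlog : Real.log (s • (1 : Matrix (Fin N) (Fin N) ℝ) - W).det = N * Real.log s := by
      unfold hAcyc at h0; linarith
    have hdet : (s • (1 : Matrix (Fin N) (Fin N) ℝ) - W).det = s ^ N := by
      have h1 : Real.log ((s • (1 : Matrix (Fin N) (Fin N) ℝ) - W).det) = Real.log (s ^ N) := by
        rw [hlog, Real.log_pow]
      exact Real.log_injOn_pos (Set.mem_Ioi.mpr hdetpos) (Set.mem_Ioi.mpr (pow_pos hs N)) h1
    set Wc := W.map Complex.ofReal with hWc
    have hmapmat : ((s • (1 : Matrix (Fin N) (Fin N) ℝ) - W).map Complex.ofReal)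
        = (s : ℂ) • (1 : Matrix (Fin N) (Fin N) ℂ) - Wc := by
      ext i j
      by_cases hij : i = j <;>
        simp [hij, hWc, Matrix.map_apply, Matrix.one_apply, Matrix.sub_apply, Matrix.smul_apply]
    have hdetC : ((s : ℂ) • (1 : Matrix (Fin N) (Fin N) ℂ) - Wc).det = (s : ℂ) ^ N := by
      have hmd := RingHom.map_det Complex.ofRealHom (s • (1 : Matrix (Fin N) (Fin N) ℝ) - W)
      rw [RingHom.mapMatrix_apply] at hmd
      rw [show ((s • (1 : Matrix (Fin N) (Fin N) ℝ) - W).map ⇑Complex.ofRealHom)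
            = ((s • (1 : Matrix (Fin N) (Fin N) ℝ) - W).map Complex.ofReal) from rfl,
        hmapmat, hdet] at hmd
      rw [← hmd, Complex.ofRealHom_eq_coe]
      push_cast
      ring
    set R := Wc.charpoly.roots with hR
    have hcard : Multiset.card R = N := roots_card' Wc
    have hprod : (R.map fun μ => (s : ℂ) - μ).prod = (s : ℂ) ^ N := by
      rw [← det_eq_prod_roots', hdetC]
    have hlt : ∀ μ ∈ R, ‖μ‖ < s := by
      intro μ hμ
      exact hρ μ (mem_spectrum_of_root' Wc (Polynomial.isRoot_of_mem_roots hμ))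
    have hne1 : ∀ μ ∈ R, (1 : ℂ) - μ / s ≠ 0 := by
      intro μ hμ h0'
      have hsne : ((s : ℂ)) ≠ 0 := by exact_mod_cast ne_of_gt hs
      have : μ = (s : ℂ) := by
        have h1 : μ / (s : ℂ) = 1 := (sub_eq_zero.mp h0').symm
        exact (div_eq_one_iff_eq hsne).mp h1
      rw [this] at hμ
      have := hlt _ hμ
      rw [Complex.norm_real, Real.norm_eq_abs, abs_of_pos hs] at this
      exact lt_irrefl _ this
    have habs : (R.map fun μ => ‖(s : ℂ) - μ‖).prod = s ^ N := by
      have h1 := congrArg (normHom : ℂ →*₀ ℝ) hprod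
      rw [map_multiset_prod (normHom : ℂ →*₀ ℝ), Multiset.map_map, map_pow] at h1
      simpa [normHom_apply, Complex.norm_real, abs_of_pos hs] using h1
    have hsne0 : ((s : ℂ)) ≠ 0 := by exact_mod_cast ne_of_gt hs
    have hone : (R.map fun μ => ‖(1 : ℂ) - μ / s‖).prod = 1 := by
      have hfact : (R.map fun μ => ‖(s : ℂ) - μ‖)
          = R.map fun μ => s * ‖(1 : ℂ) - μ / s‖ := by
        apply Multiset.map_congr rfl
        intro μ _
        rw [show ((s : ℂ) - μ) = (s : ℂ) * (1 - μ / s) by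
          field_simp [hsne0]]
        rw [norm_mul, Complex.norm_real, Real.norm_eq_abs, abs_of_pos hs]
      rw [hfact, prod_map_const_mul, hcard] at habs
      exact mul_left_cancel₀ (pow_ne_zero N (ne_of_gt hs)) (habs.trans (mul_one (s ^ N)).symm)
    have hlogsum : (R.map fun μ => Real.log (‖(1 : ℂ) - μ / s‖)).sum = 0 := by
      have hpos : ∀ x ∈ R.map fun μ => ‖(1 : ℂ) - μ / s‖, 0 < x := by
        intro x hx
        obtain ⟨μ, hμ, rfl⟩ := Multiset.mem_map.mp hx
        exact norm_pos_iff.mpr (hne1 μ hμ)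
      have h1 := multiset_log_prod _ hpos
      rw [hone, Real.log_one, Multiset.map_map] at h1
      exact h1.symm
    have hterm : ∀ μ ∈ R, HasSum (fun n : ℕ => ((μ / s) ^ n / n : ℂ).re)
        (- Real.log (‖(1 : ℂ) - μ / s‖)) := by
      intro μ hμ
      have hz : ‖μ / (s : ℂ)‖ < 1 := by
        rw [norm_div, Complex.norm_real, Real.norm_eq_abs,
          abs_of_pos hs]
        exact (div_lt_one hs).mpr (hlt μ hμ)
      have h1 := Complex.hasSum_taylorSeries_neg_log hz
      have h2 := Complex.reCLM.hasSum h1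
      simpa [Complex.log_re] using h2
    have hsum0 : HasSum (fun n : ℕ => (R.map fun μ => ((μ / s) ^ n / n : ℂ).re).sum) 0 := by
      have h1 := multiset_hasSum R _ _ hterm
      have h2 : (R.map fun μ => - Real.log (‖(1 : ℂ) - μ / s‖)).sum = 0 := by
        rw [sum_map_neg'' R (fun μ => Real.log (‖(1 : ℂ) - μ / s‖)), hlogsum, neg_zero]
      rwa [h2] at h1
    have htr' : ∀ n : ℕ, (Wc ^ n).trace = (((W ^ n).trace : ℝ) : ℂ) := by
      intro n
      rw [hWc, show W.map Complex.ofReal = Complex.ofRealHom.mapMatrix W from rfl, ← map_pow]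
      simp [Matrix.trace, Matrix.diag, RingHom.mapMatrix_apply, Matrix.map_apply]
    have htermeq : ∀ n : ℕ, (R.map fun μ => ((μ / s) ^ n / n : ℂ).re).sum
        = (W ^ n).trace / (n * s ^ n) := by
      intro n
      by_cases hn : n = 0
      · subst hn; simp
      · rw [show (R.map fun μ => ((μ / s) ^ n / n : ℂ).re)
              = (R.map fun μ => ((μ / s) ^ n / n : ℂ)).map Complex.re by
            rw [Multiset.map_map]; rfl, sum_map_re]
        have hps : (R.map fun μ => ((μ / s) ^ n / n : ℂ)).sum
            = (1 / (n * (s : ℂ) ^ n)) * (R.map fun μ => μ ^ n).sum := by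
          rw [← Multiset.sum_map_mul_left]
          apply congrArg
          apply Multiset.map_congr rfl
          intro μ _
          have hsne : ((s : ℂ)) ≠ 0 := by
            exact_mod_cast ne_of_gt hs
          have hnne : ((n : ℂ)) ≠ 0 := by
            exact_mod_cast hn
          rw [div_pow, div_div, one_div, inv_mul_eq_div, mul_comm ((s : ℂ) ^ n) ((n : ℂ))]
        rw [hps, ← trace_pow_eq_sum_pow' Wc n hn, htr' n]
        rw [show (1 / ((n : ℂ) * (s : ℂ) ^ n)) = (((1 / (n * s ^ n) : ℝ)) : ℂ) by push_cast; ring]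
        rw [← Complex.ofReal_mul, Complex.ofReal_re]
        ring
    have htracenn : ∀ n : ℕ, 0 ≤ (W ^ n).trace := by
      intro n
      exact Finset.sum_nonneg fun i _ => pow_entries_nonneg W hW n i i
    have hnonneg : ∀ n : ℕ, 0 ≤ (R.map fun μ => ((μ / s) ^ n / n : ℂ).re).sum := by
      intro n
      rw [htermeq n]
      by_cases hn : n = 0
      · subst hn; simp
      · apply div_nonneg (htracenn n)
        positivity
    have hzero := (hasSum_zero_iff_of_nonneg hnonneg).mp hsum0
    have htrz : ∀ n : ℕ, n ≠ 0 → (W ^ n).trace = 0 := by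
      intro n hn
      have h1 := congrFun hzero n
      rw [htermeq n] at h1
      have hne : (n : ℝ) * s ^ n ≠ 0 := by positivity
      field_simp at h1
      simpa using h1
    have hp : ∀ k : ℕ, k ≠ 0 → (R.map fun μ => μ ^ k).sum = 0 := by
      intro k hk
      rw [← trace_pow_eq_sum_pow' Wc k hk, htr' k, htrz k hk, Complex.ofReal_zero]
    have hall := all_zero_of_power_sums_zero R hp
    have hRrep : R = Multiset.replicate N (0 : ℂ) :=
      Multiset.eq_replicate.mpr ⟨hcard, hall⟩
    have hcp : Wc.charpoly = X ^ N := by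
      rw [← charpoly_eq_prod' Wc, show Wc.charpoly.roots = Multiset.replicate N (0 : ℂ) from hRrep]
      simp [Multiset.map_replicate, Multiset.prod_replicate]
    have hWcN : Wc ^ N = 0 := by
      have hch := Wc.aeval_self_charpoly
      rwa [hcp, map_pow, Polynomial.aeval_X] at hch
    have hmapN : Complex.ofRealHom.mapMatrix (W ^ N) = (0 : Matrix (Fin N) (Fin N) ℂ) := by
      rw [map_pow]
      exact hWcN
    ext i j
    have hentry : (((W ^ N) i j : ℝ) : ℂ) = 0 := by
      have := congrFun (congrFun (congrArg (fun M => (M : Matrix (Fin N) (Fin N) ℂ)) hmapN) i) j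
      simpa [RingHom.mapMatrix_apply, Matrix.map_apply] using this
    have : (W ^ N) i j = 0 := by exact_mod_cast hentry
    simpa using this
  · intro hW0
    have hcp : W.charpoly = X ^ N := by
      have h1 := W.isNilpotent_charpoly_sub_pow_of_isNilpotent ⟨N, hW0⟩
      have h2 : W.charpoly - X ^ (Fintype.card (Fin N)) = 0 := h1.eq_zero
      rw [Fintype.card_fin] at h2
      exact sub_eq_zero.mp h2
    have hdet : (s • (1 : Matrix (Fin N) (Fin N) ℝ) - W).det = s ^ N := by
      rw [← eval_charpoly_det, hcp]
      simp
    unfold hAcyc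
    rw [hdet, Real.log_pow]
    ring
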